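/- For the 5-dimensional Lie algebra L_{5,8} = ⟨x₁,…,x₅ : [x₁,x₂]=x₄, [x₁,x₃]=x₅⟩, one has L_{5,8} ∧ L_{5,8} ≅ A(8) and L_{5,8} ⊗ L_{5,8} ≅ A(14). -/

import Mathlib

open LieAlgebra Matrix Module


open LieAlgebra

section ProdLie
variable {L M : Type*}

instance prodLieRing [LieRing L] [LieRing M] : LieRing (L × M) where
  bracket x y := (⁅x.1, y.1⁆, ⁅x.2, y.2⁆)
  add_lie x y z := by ext <;> simp [add_lie]
  lie_add x y z := by ext <;> simp [lie_add]
  lie_self x := by ext <;> simp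
  leibniz_lie x y z := by ext <;> simp

@[simp] theorem prod_bracket_fst [LieRing L] [LieRing M] (x y : L × M) :
    ⁅x, y⁆.1 = ⁅x.1, y.1⁆ := rfl
@[simp] theorem prod_bracket_snd [LieRing L] [LieRing M] (x y : L × M) :
    ⁅x, y⁆.2 = ⁅x.2, y.2⁆ := rfl

instance prodLieAlgebra (F : Type*) [CommRing F] [LieRing L] [LieRing M]
    [LieAlgebra F L] [LieAlgebra F M] : LieAlgebra F (L × M) where
  lie_smul t x y := by ext <;> simp
end ProdLie

section AbL
variable (F : Type*) [Field F]

/-- The abelian Lie algebra of dimension `k` over `F`. -/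
def AbLie (k : ℕ) : Type _ := Fin k → F

instance (k : ℕ) : AddCommGroup (AbLie F k) := Pi.addCommGroup
instance (k : ℕ) : Module F (AbLie F k) := Pi.module _ _ _

instance (k : ℕ) : LieRing (AbLie F k) where
  bracket _ _ := 0
  add_lie _ _ _ := (zero_add 0).symm
  lie_add _ _ _ := (zero_add 0).symm
  lie_self _ := rfl
  leibniz_lie _ _ _ := (zero_add 0).symm

instance (k : ℕ) : LieAlgebra F (AbLie F k) where
  lie_smul t x y := (smul_zero t).symm

instance (k : ℕ) : FiniteDimensional F (AbLie F k) :=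
  (inferInstance : FiniteDimensional F (Fin k → F))

instance (k : ℕ) : IsLieAbelian (AbLie F k) := ⟨fun _ _ => rfl⟩
end AbL
open Matrix
section Heis
variable (F : Type*) [Field F]

/-- The Heisenberg Lie algebra `H(m)` of dimension `2m+1`. -/
def Heis (m : ℕ) : Type _ := (Fin m → F) × (Fin m → F) × F

instance (m : ℕ) : AddCommGroup (Heis F m) := Prod.instAddCommGroup
instance (m : ℕ) : Module F (Heis F m) := Prod.instModule

instance (m : ℕ) : LieRing (Heis F m) where
  bracket x y := (0, 0, x.1 ⬝ᵥ y.2.1 - y.1 ⬝ᵥ x.2.1)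
  add_lie x y z := by
    refine Prod.ext ?_ (Prod.ext ?_ ?_)
    · show (0 : Fin m → F) = 0 + 0; rw [add_zero]
    · show (0 : Fin m → F) = 0 + 0; rw [add_zero]
    · show (x.1 + y.1) ⬝ᵥ z.2.1 - z.1 ⬝ᵥ (x.2.1 + y.2.1) =
        (x.1 ⬝ᵥ z.2.1 - z.1 ⬝ᵥ x.2.1) + (y.1 ⬝ᵥ z.2.1 - z.1 ⬝ᵥ y.2.1)
      rw [add_dotProduct, dotProduct_add]; ring
  lie_add x y z := by
    refine Prod.ext ?_ (Prod.ext ?_ ?_)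
    · show (0 : Fin m → F) = 0 + 0; rw [add_zero]
    · show (0 : Fin m → F) = 0 + 0; rw [add_zero]
    · show x.1 ⬝ᵥ (y.2.1 + z.2.1) - (y.1 + z.1) ⬝ᵥ x.2.1 =
        (x.1 ⬝ᵥ y.2.1 - y.1 ⬝ᵥ x.2.1) + (x.1 ⬝ᵥ z.2.1 - z.1 ⬝ᵥ x.2.1)
      rw [add_dotProduct, dotProduct_add]; ring
  lie_self x := by
    refine Prod.ext rfl (Prod.ext rfl ?_)
    show x.1 ⬝ᵥ x.2.1 - x.1 ⬝ᵥ x.2.1 = 0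
    ring
  leibniz_lie x y z := by
    refine Prod.ext ?_ (Prod.ext ?_ ?_)
    · show (0 : Fin m → F) = 0 + 0; rw [add_zero]
    · show (0 : Fin m → F) = 0 + 0; rw [add_zero]
    · show x.1 ⬝ᵥ (0 : Fin m → F) - (0 : Fin m → F) ⬝ᵥ x.2.1 =
        ((0 : Fin m → F) ⬝ᵥ z.2.1 - z.1 ⬝ᵥ (0 : Fin m → F)) +
          (y.1 ⬝ᵥ (0 : Fin m → F) - (0 : Fin m → F) ⬝ᵥ y.2.1)
      simp

instance (m : ℕ) : LieAlgebra F (Heis F m) where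
  lie_smul t x y := by
    refine Prod.ext ?_ (Prod.ext ?_ ?_)
    · show (0 : Fin m → F) = t • 0; rw [smul_zero]
    · show (0 : Fin m → F) = t • 0; rw [smul_zero]
    · show x.1 ⬝ᵥ (t • y.2.1) - (t • y.1) ⬝ᵥ x.2.1 = t • (x.1 ⬝ᵥ y.2.1 - y.1 ⬝ᵥ x.2.1)
      rw [dotProduct_smul, smul_dotProduct, smul_sub]

instance (m : ℕ) : FiniteDimensional F (Heis F m) :=
  (inferInstance : FiniteDimensional F ((Fin m → F) × (Fin m → F) × F))
end Heis
open LieAlgebra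

universe u v

section Functors
variable (F : Type u) [Field F] (L : Type v) [LieRing L] [LieAlgebra F L]

/-- The canonical free presentation `FreeLieAlgebra F L → L`. -/
noncomputable def presHom : FreeLieAlgebra F L →ₗ⁅F⁆ L := FreeLieAlgebra.lift F id

/-- The relation ideal `R` of the canonical free presentation. -/
noncomputable def presKer : LieIdeal F (FreeLieAlgebra F L) := (presHom F L).ker

/-- The Schur multiplier `M(L) = (R ∩ F²)/[R,F]` of a Lie algebra. -/
noncomputable abbrev Multiplier : Type (max u v) :=
  ↥((presKer F L ⊓ derivedSeries F (FreeLieAlgebra F L) 1).toSubmodule) ⧸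
    (Submodule.comap
      ((presKer F L ⊓ derivedSeries F (FreeLieAlgebra F L) 1).toSubmodule).subtype
      (⁅presKer F L, (⊤ : LieIdeal F (FreeLieAlgebra F L))⁆ : LieIdeal F (FreeLieAlgebra F L)).toSubmodule)


/-- Relations defining the nonabelian tensor square. -/
def tensorRel : Set (FreeLieAlgebra F (L × L)) :=
  letI e : L × L → FreeLieAlgebra F (L × L) := FreeLieAlgebra.of F
  { x | (∃ (c : F) (a b : L), x = e (c • a, b) - c • e (a, b)) ∨
        (∃ (c : F) (a b : L), x = e (a, c • b) - c • e (a, b)) ∨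
        (∃ a a' b : L, x = e (a + a', b) - e (a, b) - e (a', b)) ∨
        (∃ a b b' : L, x = e (a, b + b') - e (a, b) - e (a, b')) ∨
        (∃ a a' b : L, x = e (⁅a, a'⁆, b) - e (a, ⁅a', b⁆) + e (a', ⁅a, b⁆)) ∨
        (∃ a b b' : L, x = e (a, ⁅b, b'⁆) - e (⁅b', a⁆, b) + e (⁅b, a⁆, b')) ∨
        (∃ a b a' b' : L, x = ⁅e (a, b), e (a', b')⁆ + e (⁅b, a⁆, ⁅a', b'⁆)) }

/-- The nonabelian tensor square `L ⊗ L`. -/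
abbrev NTensor : Type (max u v) :=
  FreeLieAlgebra F (L × L) ⧸ LieSubmodule.lieSpan F (FreeLieAlgebra F (L × L)) (tensorRel F L)


/-- The generator `a ⊗ b` of the nonabelian tensor square. -/
noncomputable def tmk (a b : L) : NTensor F L :=
  LieSubmodule.Quotient.mk (N := LieSubmodule.lieSpan F (FreeLieAlgebra F (L × L)) (tensorRel F L))
    (FreeLieAlgebra.of F (a, b))

/-- The square `L □ L`, i.e. the subalgebra of `L ⊗ L` generated by the elements `a ⊗ a`. -/
noncomputable def SqSub : LieSubalgebra F (NTensor F L) :=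
  LieSubalgebra.lieSpan F _ { x | ∃ a : L, x = tmk F L a a }

/-- The ideal of `L ⊗ L` generated by the elements `a ⊗ a`. -/
noncomputable def sqIdeal : LieIdeal F (NTensor F L) :=
  LieSubmodule.lieSpan F _ { x | ∃ a : L, x = tmk F L a a }

/-- The exterior square `L ∧ L`. -/
noncomputable abbrev ExtSq : Type (max u v) := NTensor F L ⧸ sqIdeal F L


/-- The generator `a ∧ b` of the exterior square. -/
noncomputable def wmk (a b : L) : ExtSq F L :=
  LieSubmodule.Quotient.mk (N := sqIdeal F L) (tmk F L a b)

/-- The exterior center `Z^∧(L)`. -/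
noncomputable def extCenter : Set L := { x : L | ∀ l : L, wmk F L x l = 0 }

/-- A Lie algebra is capable if it is isomorphic to `H/Z(H)` for some Lie algebra `H`. -/
def Capable : Prop :=
  ∃ (H : Type (max u v)) (_ : LieRing H) (_ : LieAlgebra F H),
    Nonempty ((H ⧸ LieAlgebra.center F H) ≃ₗ⁅F⁆ L)

/-- The corank `t(L)` of an `n`-dimensional nilpotent Lie algebra. -/
noncomputable def corank : ℕ :=
  Module.finrank F L * (Module.finrank F L - 1) / 2 - Module.finrank F (Multiplier F L)

/-- The abelianization of `L` (as an `F`-module). -/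
noncomputable abbrev AbQuot : Type v := L ⧸ derivedSeries F L 1

end Functors
section L58
variable (F : Type u) [Field F]

/-- The 5-dimensional class-two nilpotent Lie algebra `L_{5,8}` with
`[x₁,x₂] = x₄`, `[x₁,x₃] = x₅`. -/
def L58 : Type u := Fin 5 → F

instance : AddCommGroup (L58 F) := Pi.addCommGroup
instance : Module F (L58 F) := Pi.module _ _ _

instance : LieRing (L58 F) where
  bracket x y := ![0, 0, 0, x 0 * y 1 - y 0 * x 1, x 0 * y 2 - y 0 * x 2]
  add_lie x y z := by
    funext i
    show (![0, 0, 0, (x 0 + y 0) * z 1 - z 0 * (x 1 + y 1),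
            (x 0 + y 0) * z 2 - z 0 * (x 2 + y 2)] : Fin 5 → F) i =
      ![0, 0, 0, x 0 * z 1 - z 0 * x 1, x 0 * z 2 - z 0 * x 2] i +
      ![0, 0, 0, y 0 * z 1 - z 0 * y 1, y 0 * z 2 - z 0 * y 2] i
    fin_cases i <;> simp <;> ring
  lie_add x y z := by
    funext i
    show (![0, 0, 0, x 0 * (y 1 + z 1) - (y 0 + z 0) * x 1,
            x 0 * (y 2 + z 2) - (y 0 + z 0) * x 2] : Fin 5 → F) i =
      ![0, 0, 0, x 0 * y 1 - y 0 * x 1, x 0 * y 2 - y 0 * x 2] i +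
      ![0, 0, 0, x 0 * z 1 - z 0 * x 1, x 0 * z 2 - z 0 * x 2] i
    fin_cases i <;> simp <;> ring
  lie_self x := by
    funext i
    show (![0, 0, 0, x 0 * x 1 - x 0 * x 1, x 0 * x 2 - x 0 * x 2] : Fin 5 → F) i = 0
    fin_cases i <;> simp
  leibniz_lie x y z := by
    funext i
    set b : (Fin 5 → F) → (Fin 5 → F) → Fin 5 → F :=
      fun u v => ![0, 0, 0, u 0 * v 1 - v 0 * u 1, u 0 * v 2 - v 0 * u 2] with hb
    show b x (b y z) i = b (b x y) z i + b y (b x z) i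
    fin_cases i <;> simp [hb] <;> ring

instance : LieAlgebra F (L58 F) where
  lie_smul t x y := by
    funext i
    show (![0, 0, 0, x 0 * (t * y 1) - (t * y 0) * x 1,
            x 0 * (t * y 2) - (t * y 0) * x 2] : Fin 5 → F) i =
      (t • (![0, 0, 0, x 0 * y 1 - y 0 * x 1, x 0 * y 2 - y 0 * x 2] : Fin 5 → F)) i
    fin_cases i <;> simp <;> ring

instance : FiniteDimensional F (L58 F) := inferInstanceAs (FiniteDimensional F (Fin 5 → F))
end L58

/-! The nonabelian tensor square is spanned by the pure tensors `a ⊗ b` (their span is closed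
under brackets, as `[a ⊗ b, a' ⊗ b'] = -[b, a] ⊗ [a', b']`), hence by the `eᵢ ⊗ eⱼ` for the
standard basis `e₀, …, e₄` of `L_{5,8}`.
Since `e₃ = [e₀, e₁]` and `e₄ = [e₀, e₂]` are central, the relation
`[a, a'] ⊗ b = a ⊗ [a', b] - a' ⊗ [a, b]` rewrites every `e₃ ⊗ b`, `e₄ ⊗ b` and `e₂ ⊗ e₃` in
terms of the 14 tensors listed in `L58.tensorIndex`; in the exterior square `a ∧ a = 0` leaves
the 8 listed in `L58.extIndex`. Conversely, explicit bilinear coordinates satisfying the defining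
relations induce Lie algebra maps onto `A(14)` and `A(8)` sending these spanning families to the
standard bases, so both maps are isomorphisms. -/

section LieQuotient
variable {R L L' : Type*} [CommRing R] [LieRing L] [LieAlgebra R L] [LieRing L'] [LieAlgebra R L']

def LieIdeal.mkQ (I : LieIdeal R L) : L →ₗ⁅R⁆ L ⧸ I :=
  { I.toSubmodule.mkQ with map_lie' := fun {x y} => LieSubmodule.Quotient.mk_bracket I x y }

theorem LieIdeal.mkQ_surjective (I : LieIdeal R L) : Function.Surjective I.mkQ :=
  I.toSubmodule.mkQ_surjective

def LieIdeal.liftQ (I : LieIdeal R L) (f : L →ₗ⁅R⁆ L') (h : I ≤ f.ker) : L ⧸ I →ₗ⁅R⁆ L' :=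
  { I.toSubmodule.liftQ f (fun x hx => LinearMap.mem_ker.mpr (f.mem_ker.mp (h hx))) with
    map_lie' := by
      rintro ⟨x⟩ ⟨y⟩
      exact f.map_lie x y }

end LieQuotient

theorem LinearMap.bijective_of_span_eq_top_of_apply_eq_basis {R M N ι : Type*} [Ring R]
    [AddCommGroup M] [Module R M] [AddCommGroup N] [Module R N] (f : M →ₗ[R] N)
    (B : Basis ι R N) (b : ι → M) (hb : Submodule.span R (Set.range b) = ⊤)
    (hfb : ∀ i, f (b i) = B i) : Function.Bijective f := by
  have hfb' : f ∘ b = B := funext hfb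
  let Bm := Basis.mk (LinearIndependent.of_comp f (hfb' ▸ B.linearIndependent)) hb.ge
  have : f = (Bm.equiv B (Equiv.refl ι)).toLinearMap :=
    Bm.ext fun i => by
      rw [LinearEquiv.coe_coe, Basis.equiv_apply, Equiv.refl_apply, Basis.mk_apply, hfb]
  rw [this]
  exact LinearEquiv.bijective _

theorem lie_mem_span_of_forall_lie_mem {R N : Type*} [CommRing R] [LieRing N] [LieAlgebra R N]
    {s : Set N} (hs : ∀ x ∈ s, ∀ y ∈ s, ⁅x, y⁆ ∈ Submodule.span R s) {x y : N}
    (hx : x ∈ Submodule.span R s) (hy : y ∈ Submodule.span R s) :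
    ⁅x, y⁆ ∈ Submodule.span R s := by
  have h := Submodule.apply_mem_map₂
    (LinearMap.mk₂ R (fun x y : N => ⁅x, y⁆) add_lie smul_lie lie_add lie_smul) hx hy
  rw [Submodule.map₂_span_span] at h
  refine Submodule.span_le.mpr ?_ h
  rintro _ ⟨x, hx, y, hy, rfl⟩
  exact hs x hx y hy

section TensorSquare
variable {F : Type u} [Field F] {L : Type v} [LieRing L] [LieAlgebra F L]

variable (F L) in
noncomputable abbrev tensorRelIdeal : LieIdeal F (FreeLieAlgebra F (L × L)) :=
  LieSubmodule.lieSpan F (FreeLieAlgebra F (L × L)) (tensorRel F L)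

theorem tmk_eq_mkQ (a b : L) :
    tmk F L a b = (tensorRelIdeal F L).mkQ (FreeLieAlgebra.of F (a, b)) :=
  rfl

theorem mkQ_eq_zero_of_mem_tensorRel {x : FreeLieAlgebra F (L × L)} (hx : x ∈ tensorRel F L) :
    (tensorRelIdeal F L).mkQ x = 0 :=
  LieSubmodule.Quotient.mk_eq_zero'.mpr (LieSubmodule.subset_lieSpan hx)

theorem tmk_smul_left (c : F) (a b : L) : tmk F L (c • a) b = c • tmk F L a b := by
  have h := mkQ_eq_zero_of_mem_tensorRel (F := F) (Or.inl ⟨c, a, b, rfl⟩)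
  rwa [map_sub, map_smul, ← tmk_eq_mkQ, ← tmk_eq_mkQ, sub_eq_zero] at h

theorem tmk_smul_right (c : F) (a b : L) : tmk F L a (c • b) = c • tmk F L a b := by
  have h := mkQ_eq_zero_of_mem_tensorRel (F := F) (Or.inr <| Or.inl ⟨c, a, b, rfl⟩)
  rwa [map_sub, map_smul, ← tmk_eq_mkQ, ← tmk_eq_mkQ, sub_eq_zero] at h

theorem tmk_add_left (a a' b : L) : tmk F L (a + a') b = tmk F L a b + tmk F L a' b := by
  have h := mkQ_eq_zero_of_mem_tensorRel (F := F)
    (Or.inr <| Or.inr <| Or.inl ⟨a, a', b, rfl⟩)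
  rwa [map_sub, map_sub, ← tmk_eq_mkQ, ← tmk_eq_mkQ, ← tmk_eq_mkQ, sub_sub, sub_eq_zero] at h

theorem tmk_add_right (a b b' : L) : tmk F L a (b + b') = tmk F L a b + tmk F L a b' := by
  have h := mkQ_eq_zero_of_mem_tensorRel (F := F)
    (Or.inr <| Or.inr <| Or.inr <| Or.inl ⟨a, b, b', rfl⟩)
  rwa [map_sub, map_sub, ← tmk_eq_mkQ, ← tmk_eq_mkQ, ← tmk_eq_mkQ, sub_sub, sub_eq_zero] at h

theorem tmk_lie_left (a a' b : L) :
    tmk F L ⁅a, a'⁆ b = tmk F L a ⁅a', b⁆ - tmk F L a' ⁅a, b⁆ := by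
  have h := mkQ_eq_zero_of_mem_tensorRel (F := F)
    (Or.inr <| Or.inr <| Or.inr <| Or.inr <| Or.inl ⟨a, a', b, rfl⟩)
  rw [map_add, map_sub, ← tmk_eq_mkQ, ← tmk_eq_mkQ, ← tmk_eq_mkQ] at h
  rw [← sub_eq_zero, ← h]
  abel

theorem lie_tmk (a b a' b' : L) :
    ⁅tmk F L a b, tmk F L a' b'⁆ = -tmk F L ⁅b, a⁆ ⁅a', b'⁆ := by
  have h := mkQ_eq_zero_of_mem_tensorRel (F := F)
    (Or.inr <| Or.inr <| Or.inr <| Or.inr <| Or.inr <| Or.inr ⟨a, b, a', b', rfl⟩)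
  rwa [map_add, LieHom.map_lie, ← tmk_eq_mkQ, ← tmk_eq_mkQ, ← tmk_eq_mkQ,
    add_eq_zero_iff_eq_neg] at h

variable (F L) in
noncomputable def tmkBilin : L →ₗ[F] L →ₗ[F] NTensor F L :=
  LinearMap.mk₂ F (tmk F L) tmk_add_left tmk_smul_left tmk_add_right tmk_smul_right

@[simp]
theorem tmkBilin_apply (a b : L) : tmkBilin F L a b = tmk F L a b :=
  rfl

@[simp]
theorem tmk_zero_left (b : L) : tmk F L 0 b = 0 :=
  LinearMap.congr_fun (tmkBilin F L).map_zero b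

@[simp]
theorem tmk_zero_right (a : L) : tmk F L a 0 = 0 :=
  (tmkBilin F L a).map_zero

@[simp]
theorem tmk_neg_right (a b : L) : tmk F L a (-b) = -tmk F L a b :=
  (tmkBilin F L a).map_neg b

section Lift
variable {M : Type*} [LieRing M] [LieAlgebra F M] (φ : L →ₗ[F] L →ₗ[F] M)
  (h_lie_left : ∀ a a' b, φ ⁅a, a'⁆ b = φ a ⁅a', b⁆ - φ a' ⁅a, b⁆)
  (h_lie_right : ∀ a b b', φ a ⁅b, b'⁆ = φ ⁅b', a⁆ b - φ ⁅b, a⁆ b')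
  (h_lie : ∀ a b a' b', ⁅φ a b, φ a' b'⁆ = -φ ⁅b, a⁆ ⁅a', b'⁆)

include h_lie_left h_lie_right h_lie in
theorem tensorRelIdeal_le_ker_lift :
    tensorRelIdeal F L ≤ (FreeLieAlgebra.lift F fun p : L × L => φ p.1 p.2).ker := by
  refine LieSubmodule.lieSpan_le.mpr ?_
  rintro x (⟨c, a, b, rfl⟩ | ⟨c, a, b, rfl⟩ | ⟨a, a', b, rfl⟩ | ⟨a, b, b', rfl⟩ |
    ⟨a, a', b, rfl⟩ | ⟨a, b, b', rfl⟩ | ⟨a, b, a', b', rfl⟩) <;>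
  simp [FreeLieAlgebra.lift_of_apply]
  · rw [h_lie_left]; abel
  · rw [h_lie_right]; abel
  · rw [h_lie, neg_add_cancel]

noncomputable def NTensor.lift : NTensor F L →ₗ⁅F⁆ M :=
  (tensorRelIdeal F L).liftQ _ (tensorRelIdeal_le_ker_lift φ h_lie_left h_lie_right h_lie)

@[simp]
theorem NTensor.lift_tmk (a b : L) :
    NTensor.lift φ h_lie_left h_lie_right h_lie (tmk F L a b) = φ a b :=
  FreeLieAlgebra.lift_of_apply _ _

end Lift

theorem span_tmk_eq_top : Submodule.span F (Set.image2 (tmk F L) .univ .univ) = ⊤ := by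
  set P := Submodule.span F (Set.image2 (tmk F L) .univ .univ)
  have tmk_mem (a b : L) : tmk F L a b ∈ P := Submodule.subset_span ⟨a, trivial, b, trivial, rfl⟩
  let S : LieSubalgebra F (NTensor F L) :=
    { P with
      lie_mem' := lie_mem_span_of_forall_lie_mem <| by
        rintro _ ⟨a, -, b, -, rfl⟩ _ ⟨a', -, b', -, rfl⟩
        simpa [lie_tmk] using tmk_mem _ _ }
  let j := FreeLieAlgebra.lift F fun p : L × L => (⟨tmk F L p.1 p.2, tmk_mem _ _⟩ : S)
  have hj : S.incl.comp j = (tensorRelIdeal F L).mkQ :=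
    FreeLieAlgebra.hom_ext fun p => by simp [j, tmk_eq_mkQ]
  refine eq_top_iff.mpr fun z _ => ?_
  obtain ⟨w, rfl⟩ := (tensorRelIdeal F L).mkQ_surjective z
  rw [← hj]
  exact (j w).2

theorem span_image2_tmk_eq_top {s : Set L} (hs : Submodule.span F s = ⊤) :
    Submodule.span F (Set.image2 (tmk F L) s s) = ⊤ := by
  have key := Submodule.map₂_span_span F (tmkBilin F L) s s
  rw [hs, ← Submodule.span_univ, Submodule.map₂_span_span] at key
  simpa [span_tmk_eq_top] using key.symm

theorem wmk_eq_mkQ (a b : L) : wmk F L a b = (sqIdeal F L).mkQ (tmk F L a b) :=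
  rfl

theorem wmk_self (a : L) : wmk F L a a = 0 :=
  LieSubmodule.Quotient.mk_eq_zero'.mpr (LieSubmodule.subset_lieSpan ⟨a, rfl⟩)

theorem wmk_swap (a b : L) : wmk F L b a = -wmk F L a b := by
  have h := wmk_self (F := F) (a + b)
  rw [wmk_eq_mkQ, tmk_add_left, tmk_add_right, tmk_add_right] at h
  simp only [map_add, ← wmk_eq_mkQ, wmk_self, zero_add, add_zero] at h
  exact eq_neg_of_add_eq_zero_right h

noncomputable def ExtSq.lift {M : Type*} [LieRing M] [LieAlgebra F M]
    (f : NTensor F L →ₗ⁅F⁆ M) (hf : ∀ a, f (tmk F L a a) = 0) : ExtSq F L →ₗ⁅F⁆ M :=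
  (sqIdeal F L).liftQ f <| LieSubmodule.lieSpan_le.mpr <| by
    rintro _ ⟨a, rfl⟩
    exact hf a

end TensorSquare

namespace AbLie
variable {F : Type u} [Field F] {k : ℕ}

@[simp] theorem zero_apply (i : Fin k) : (0 : AbLie F k) i = 0 := rfl
@[simp] theorem add_apply (v w : AbLie F k) (i : Fin k) : (v + w) i = v i + w i := rfl
@[simp] theorem sub_apply (v w : AbLie F k) (i : Fin k) : (v - w) i = v i - w i := rfl
@[simp] theorem smul_apply (c : F) (v : AbLie F k) (i : Fin k) : (c • v) i = c * v i := rfl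

end AbLie

namespace L58
variable {F : Type u} [Field F]

theorem lie_def (a b : L58 F) :
    ⁅a, b⁆ = ![0, 0, 0, a 0 * b 1 - b 0 * a 1, a 0 * b 2 - b 0 * a 2] :=
  rfl

@[simp] theorem zero_apply (i : Fin 5) : (0 : L58 F) i = 0 := rfl
@[simp] theorem add_apply (a b : L58 F) (i : Fin 5) : (a + b) i = a i + b i := rfl
@[simp] theorem smul_apply (c : F) (a : L58 F) (i : Fin 5) : (c • a) i = c * a i := rfl

variable (F) in
def e (i : Fin 5) : L58 F := Pi.single i 1

theorem span_range_e : Submodule.span F (Set.range (e F)) = ⊤ := by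
  have h : e F = ⇑(Pi.basisFun F (Fin 5)) := funext fun i => (Pi.basisFun_apply F (Fin 5) i).symm
  rw [h]
  exact (Pi.basisFun F (Fin 5)).span_eq

theorem lie_e0_e1 : ⁅e F 0, e F 1⁆ = e F 3 := by
  rw [lie_def]; funext k; fin_cases k <;> simp [e]

theorem lie_e0_e2 : ⁅e F 0, e F 2⁆ = e F 4 := by
  rw [lie_def]; funext k; fin_cases k <;> simp [e]

theorem lie_e1_e0 : ⁅e F 1, e F 0⁆ = -e F 3 := by
  rw [← lie_skew, lie_e0_e1]

theorem lie_e2_e0 : ⁅e F 2, e F 0⁆ = -e F 4 := by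
  rw [← lie_skew, lie_e0_e2]

theorem lie_e0_e3 : ⁅e F 0, e F 3⁆ = 0 := by
  rw [lie_def]; funext k; fin_cases k <;> simp [e]

theorem lie_e0_e4 : ⁅e F 0, e F 4⁆ = 0 := by
  rw [lie_def]; funext k; fin_cases k <;> simp [e]

theorem lie_e_of_ne_zero {i j : Fin 5} (hi : i ≠ 0) (hj : j ≠ 0) : ⁅e F i, e F j⁆ = 0 := by
  rw [lie_def]; funext k; fin_cases k <;> simp [e, Pi.single_apply, hi.symm, hj.symm]

theorem tmk_e3_left (b : L58 F) :
    tmk F _ (e F 3) b = tmk F _ (e F 0) ⁅e F 1, b⁆ - tmk F _ (e F 1) ⁅e F 0, b⁆ := by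
  rw [← lie_e0_e1, tmk_lie_left]

theorem tmk_e4_left (b : L58 F) :
    tmk F _ (e F 4) b = tmk F _ (e F 0) ⁅e F 2, b⁆ - tmk F _ (e F 2) ⁅e F 0, b⁆ := by
  rw [← lie_e0_e2, tmk_lie_left]

theorem tmk_e2_e3 : tmk F (L58 F) (e F 2) (e F 3) = tmk F _ (e F 1) (e F 4) := by
  have h := tmk_lie_left (F := F) (e F 1) (e F 2) (e F 0)
  rw [lie_e_of_ne_zero (by decide) (by decide), lie_e2_e0, lie_e1_e0, tmk_zero_left,
    tmk_neg_right, tmk_neg_right, sub_neg_eq_add, neg_add_eq_sub, eq_comm, sub_eq_zero] at h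
  exact h

def tensorIndex : Fin 14 → Fin 5 × Fin 5 :=
  ![(0, 0), (0, 1), (0, 2), (1, 0), (1, 1), (1, 2), (2, 0), (2, 1), (2, 2),
    (0, 3), (0, 4), (1, 3), (2, 4), (1, 4)]

variable (F) in
noncomputable def tensorGen (k : Fin 14) : NTensor F (L58 F) :=
  tmk F _ (e F (tensorIndex k).1) (e F (tensorIndex k).2)

theorem tmk_e_mem_span_tensorGen (i j : Fin 5) :
    tmk F _ (e F i) (e F j) ∈ Submodule.span F (Set.range (tensorGen F)) := by
  fin_cases i <;> fin_cases j <;>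
  simp [tmk_e3_left, tmk_e4_left, tmk_e2_e3, lie_e0_e1, lie_e0_e2, lie_e1_e0, lie_e2_e0,
    lie_e0_e3, lie_e0_e4, lie_e_of_ne_zero]
  all_goals exact Submodule.subset_span (by simp [tensorGen, tensorIndex, Fin.exists_fin_succ])

theorem span_range_tensorGen : Submodule.span F (Set.range (tensorGen F)) = ⊤ := by
  refine eq_top_iff.mpr <| (span_image2_tmk_eq_top (span_range_e (F := F))).ge.trans ?_
  refine Submodule.span_le.mpr ?_
  rintro _ ⟨_, ⟨i, rfl⟩, _, ⟨j, rfl⟩, rfl⟩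
  exact tmk_e_mem_span_tensorGen i j

def extIndex : Fin 8 → Fin 5 × Fin 5 :=
  ![(0, 1), (0, 2), (1, 2), (0, 3), (0, 4), (1, 3), (2, 4), (1, 4)]

variable (F) in
noncomputable def extGen (k : Fin 8) : ExtSq F (L58 F) :=
  wmk F _ (e F (extIndex k).1) (e F (extIndex k).2)

theorem wmk_tensorIndex_mem_span_extGen (k : Fin 14) :
    wmk F _ (e F (tensorIndex k).1) (e F (tensorIndex k).2) ∈
      Submodule.span F (Set.range (extGen F)) := by
  fin_cases k <;>
  simp [tensorIndex, wmk_self, wmk_swap (e F 0) (e F 1), wmk_swap (e F 0) (e F 2),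
    wmk_swap (e F 1) (e F 2)]
  all_goals exact Submodule.subset_span (by simp [extGen, extIndex, Fin.exists_fin_succ])

theorem span_range_extGen : Submodule.span F (Set.range (extGen F)) = ⊤ := by
  have h := congrArg (Submodule.map (sqIdeal F (L58 F)).mkQ.toLinearMap)
    (span_range_tensorGen (F := F))
  rw [Submodule.map_span, Submodule.map_top,
    LinearMap.range_eq_top.mpr (sqIdeal F (L58 F)).mkQ_surjective, ← Set.range_comp] at h
  rw [eq_top_iff, ← h, Submodule.span_le]
  rintro _ ⟨k, rfl⟩
  exact wmk_tensorIndex_mem_span_extGen k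

-- The first nine coordinates are those of `L/L² ⊗ L/L²`; the last five pair `L/L²` with
-- `L² = ⟨e₃, e₄⟩` in the combinations that the relations of `L ⊗ L` leave independent.
def tensorCoord (a b : L58 F) : AbLie F 14 :=
  ![a 0 * b 0, a 0 * b 1, a 0 * b 2, a 1 * b 0, a 1 * b 1, a 1 * b 2, a 2 * b 0, a 2 * b 1,
    a 2 * b 2, a 0 * b 3 - a 3 * b 0, a 0 * b 4 - a 4 * b 0, a 1 * b 3 - a 3 * b 1,
    a 2 * b 4 - a 4 * b 2, a 1 * b 4 + a 2 * b 3 - a 3 * b 2 - a 4 * b 1]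

variable (F) in
noncomputable def tensorCoordBilin : L58 F →ₗ[F] L58 F →ₗ[F] AbLie F 14 :=
  LinearMap.mk₂ F tensorCoord
    (fun _ _ _ => by
      funext k; simp only [AbLie.add_apply]; fin_cases k <;> simp [tensorCoord] <;> ring)
    (fun _ _ _ => by
      funext k; simp only [AbLie.smul_apply]; fin_cases k <;> simp [tensorCoord] <;> ring)
    (fun _ _ _ => by
      funext k; simp only [AbLie.add_apply]; fin_cases k <;> simp [tensorCoord] <;> ring)
    (fun _ _ _ => by
      funext k; simp only [AbLie.smul_apply]; fin_cases k <;> simp [tensorCoord] <;> ring)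

theorem tensorCoord_lie_left (a a' b : L58 F) :
    tensorCoord ⁅a, a'⁆ b = tensorCoord a ⁅a', b⁆ - tensorCoord a' ⁅a, b⁆ := by
  funext k; simp only [AbLie.sub_apply]; fin_cases k <;> simp [tensorCoord, lie_def] <;> ring

theorem tensorCoord_lie_right (a b b' : L58 F) :
    tensorCoord a ⁅b, b'⁆ = tensorCoord ⁅b', a⁆ b - tensorCoord ⁅b, a⁆ b' := by
  funext k; simp only [AbLie.sub_apply]; fin_cases k <;> simp [tensorCoord, lie_def] <;> ring

theorem lie_tensorCoord (a b a' b' : L58 F) :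
    ⁅tensorCoord a b, tensorCoord a' b'⁆ = -tensorCoord ⁅b, a⁆ ⁅a', b'⁆ := by
  rw [trivial_lie_zero, eq_comm, neg_eq_zero]
  funext k; simp only [AbLie.zero_apply]; fin_cases k <;> simp [tensorCoord, lie_def]

theorem tensorCoord_tensorIndex (k : Fin 14) :
    tensorCoord (e F (tensorIndex k).1) (e F (tensorIndex k).2) = Pi.basisFun F (Fin 14) k := by
  funext j; fin_cases k <;> fin_cases j <;> simp [tensorCoord, tensorIndex, e]

variable (F) in
noncomputable def tensorCoordHom : NTensor F (L58 F) →ₗ⁅F⁆ AbLie F 14 :=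
  NTensor.lift (tensorCoordBilin F) tensorCoord_lie_left tensorCoord_lie_right lie_tensorCoord

theorem tensorCoordHom_tmk (a b : L58 F) : tensorCoordHom F (tmk F _ a b) = tensorCoord a b :=
  NTensor.lift_tmk _ _ _ _ a b

variable (F) in
noncomputable def tensorEquiv : NTensor F (L58 F) ≃ₗ⁅F⁆ AbLie F 14 :=
  LieEquiv.ofBijective (tensorCoordHom F) <|
    LinearMap.bijective_of_span_eq_top_of_apply_eq_basis _ (Pi.basisFun F (Fin 14))
      (tensorGen F) span_range_tensorGen
      fun k => (tensorCoordHom_tmk _ _).trans (tensorCoord_tensorIndex k)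

def extCoord (a b : L58 F) : AbLie F 8 :=
  ![a 0 * b 1 - a 1 * b 0, a 0 * b 2 - a 2 * b 0, a 1 * b 2 - a 2 * b 1, a 0 * b 3 - a 3 * b 0,
    a 0 * b 4 - a 4 * b 0, a 1 * b 3 - a 3 * b 1, a 2 * b 4 - a 4 * b 2,
    a 1 * b 4 + a 2 * b 3 - a 3 * b 2 - a 4 * b 1]

variable (F) in
noncomputable def extCoordBilin : L58 F →ₗ[F] L58 F →ₗ[F] AbLie F 8 :=
  LinearMap.mk₂ F extCoord
    (fun _ _ _ => by
      funext k; simp only [AbLie.add_apply]; fin_cases k <;> simp [extCoord] <;> ring)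
    (fun _ _ _ => by
      funext k; simp only [AbLie.smul_apply]; fin_cases k <;> simp [extCoord] <;> ring)
    (fun _ _ _ => by
      funext k; simp only [AbLie.add_apply]; fin_cases k <;> simp [extCoord] <;> ring)
    (fun _ _ _ => by
      funext k; simp only [AbLie.smul_apply]; fin_cases k <;> simp [extCoord] <;> ring)

theorem extCoord_lie_left (a a' b : L58 F) :
    extCoord ⁅a, a'⁆ b = extCoord a ⁅a', b⁆ - extCoord a' ⁅a, b⁆ := by
  funext k; simp only [AbLie.sub_apply]; fin_cases k <;> simp [extCoord, lie_def] <;> ring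

theorem extCoord_lie_right (a b b' : L58 F) :
    extCoord a ⁅b, b'⁆ = extCoord ⁅b', a⁆ b - extCoord ⁅b, a⁆ b' := by
  funext k; simp only [AbLie.sub_apply]; fin_cases k <;> simp [extCoord, lie_def] <;> ring

theorem lie_extCoord (a b a' b' : L58 F) :
    ⁅extCoord a b, extCoord a' b'⁆ = -extCoord ⁅b, a⁆ ⁅a', b'⁆ := by
  rw [trivial_lie_zero, eq_comm, neg_eq_zero]
  funext k; simp only [AbLie.zero_apply]; fin_cases k <;> simp [extCoord, lie_def]

theorem extCoord_self (a : L58 F) : extCoord a a = 0 := by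
  funext k; simp only [AbLie.zero_apply]; fin_cases k <;> simp [extCoord] <;> ring

theorem extCoord_extIndex (k : Fin 8) :
    extCoord (e F (extIndex k).1) (e F (extIndex k).2) = Pi.basisFun F (Fin 8) k := by
  funext j; fin_cases k <;> fin_cases j <;> simp [extCoord, extIndex, e]

variable (F) in
noncomputable def extCoordHom : ExtSq F (L58 F) →ₗ⁅F⁆ AbLie F 8 :=
  ExtSq.lift
    (NTensor.lift (extCoordBilin F) extCoord_lie_left extCoord_lie_right lie_extCoord)
    (fun a => (NTensor.lift_tmk _ _ _ _ a a).trans (extCoord_self a))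

theorem extCoordHom_wmk (a b : L58 F) : extCoordHom F (wmk F _ a b) = extCoord a b :=
  NTensor.lift_tmk (extCoordBilin F) extCoord_lie_left extCoord_lie_right lie_extCoord a b

variable (F) in
noncomputable def extEquiv : ExtSq F (L58 F) ≃ₗ⁅F⁆ AbLie F 8 :=
  LieEquiv.ofBijective (extCoordHom F) <|
    LinearMap.bijective_of_span_eq_top_of_apply_eq_basis _ (Pi.basisFun F (Fin 8))
      (extGen F) span_range_extGen
      fun k => (extCoordHom_wmk _ _).trans (extCoord_extIndex k)

end L58

/-- `L_{5,8} ∧ L_{5,8} ≅ A(8)` and `L_{5,8} ⊗ L_{5,8} ≅ A(14)`. -/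
theorem L58_exterior_and_tensor (F : Type u) [Field F] :
    Nonempty (ExtSq F (L58 F) ≃ₗ⁅F⁆ AbLie F 8) ∧
    Nonempty (NTensor F (L58 F) ≃ₗ⁅F⁆ AbLie F 14) :=
  ⟨⟨L58.extEquiv F⟩, ⟨L58.tensorEquiv F⟩⟩
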